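/- Let G be a finite group. There exists a CD-subgroup M = M(G) of G containing every CD-subgroup of G, its centralizer m(G) := C_G(M(G)) is a CD-subgroup contained in every CD-subgroup of G, and moreover m(G) = Z(M(G)) (the center of M(G)) and M(G) = C_G(m(G)). -/

import Mathlib

open Pointwise

/-- The Chermak–Delgado index-measure of a subgroup `H` of `G`:
`m(G,H) = |G:H| * |G:C_G(H)|`. -/
noncomputable def cdMeasure {G : Type*} [Group G] (H : Subgroup G) : ℕ :=
  H.index * (Subgroup.centralizer (H : Set G)).index

/-- `μ(G)`, the minimum of `m(G,H)` over all subgroups `H ≤ G`. -/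
noncomputable def cdMu (G : Type*) [Group G] : ℕ :=
  sInf {n : ℕ | ∃ H : Subgroup G, cdMeasure H = n}

/-- A subgroup `H ≤ G` is a CD-subgroup if `m(G,H) = μ(G)`. -/
def IsCDSubgroup {G : Type*} [Group G] (H : Subgroup G) : Prop :=
  cdMeasure H = cdMu G

/-!
The index-measure is submultiplicative on joins and meets:
`m(H ⊔ K) m(H ⊓ K) ≤ m(H) m(K)`, because `|G:H ⊓ K| |G:H ⊔ K| ≤ |G:H| |G:K|`,
`C(H ⊔ K) = C(H) ⊓ C(K)` and `C(H ⊓ K) ≥ C(H) ⊔ C(K)`. Hence the join of two CD-subgroups is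
again one, and `M(G)` is the join of all of them. Since `H ≤ C(C(H))`, passing to the
centralizer does not increase the measure, so the centralizer of a CD-subgroup `H` is a
CD-subgroup and `C(C(H)) = H`. Then `C(M) ≤ C(C(H)) = H` for every CD-subgroup `H`, as
`C(H) ≤ M`; in particular `C(M) ≤ M`, i.e. `C(M) = Z(M)`.
-/

namespace Subgroup

variable {G : Type*} [Group G]

theorem index_inf_mul_index_sup_le (H K : Subgroup G) :
    (H ⊓ K).index * (H ⊔ K).index ≤ H.index * K.index := by
  by_cases hK : K.relIndex (H ⊔ K) = 0
  · have hK0 : K.index = 0 := by rw [← relIndex_mul_index le_sup_right, hK, zero_mul]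
    have hHK0 : (H ⊓ K).index = 0 := Nat.eq_zero_of_zero_dvd (hK0 ▸ index_dvd_of_le inf_le_right)
    simp [hK0, hHK0]
  · calc (H ⊓ K).index * (H ⊔ K).index = K.relIndex H * H.index * (H ⊔ K).index := by
          rw [← relIndex_mul_index (inf_le_left : H ⊓ K ≤ H), inf_relIndex_left]
      _ ≤ K.relIndex (H ⊔ K) * H.index * (H ⊔ K).index := by
          gcongr; exact relIndex_le_of_le_right le_sup_left hK
      _ = H.index * K.index := by
          rw [← relIndex_mul_index (le_sup_right : K ≤ H ⊔ K)]; ring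

theorem centralizer_sup (H K : Subgroup G) :
    centralizer ((H ⊔ K : Subgroup G) : Set G) = centralizer H ⊓ centralizer K :=
  le_antisymm
    (le_inf (centralizer_le (SetLike.coe_mono le_sup_left))
      (centralizer_le (SetLike.coe_mono le_sup_right)))
    (le_centralizer_iff.mpr
      (sup_le (le_centralizer_iff.mp inf_le_left) (le_centralizer_iff.mp inf_le_right)))

theorem le_centralizer_centralizer (H : Subgroup G) :
    H ≤ centralizer (centralizer (H : Set G) : Set G) :=
  le_centralizer_iff.mp le_rfl

theorem map_subtype_center (H : Subgroup G) :
    (center H).map H.subtype = centralizer (H : Set G) ⊓ H := by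
  ext x
  simp only [mem_map, mem_center_iff, mem_inf, mem_centralizer_iff, Subtype.ext_iff,
    coe_mul, subtype_apply, Subtype.forall]
  constructor
  · rintro ⟨⟨y, hy⟩, hyc, rfl⟩
    exact ⟨hyc, hy⟩
  · rintro ⟨hxc, hx⟩
    exact ⟨⟨x, hx⟩, hxc, rfl⟩

end Subgroup

open Subgroup

section ChermakDelgado

variable {G : Type*} [Group G]

theorem cdMu_le_cdMeasure (H : Subgroup G) : cdMu G ≤ cdMeasure H :=
  Nat.sInf_le ⟨H, rfl⟩

theorem exists_isCDSubgroup : ∃ H : Subgroup G, IsCDSubgroup H :=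
  Nat.sInf_mem (s := {n | ∃ H : Subgroup G, cdMeasure H = n}) ⟨_, ⊥, rfl⟩

theorem cdMeasure_centralizer_le (H : Subgroup G) [H.FiniteIndex] :
    cdMeasure (centralizer (H : Set G)) ≤ cdMeasure H := by
  rw [cdMeasure, cdMeasure, mul_comm H.index]
  gcongr
  exact le_centralizer_centralizer H

/-- The largest CD-subgroup `M(G)`. -/
noncomputable def maxCDSubgroup (G : Type*) [Group G] : Subgroup G :=
  sSup {H : Subgroup G | IsCDSubgroup H}

theorem IsCDSubgroup.le_maxCDSubgroup {H : Subgroup G} (hH : IsCDSubgroup H) :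
    H ≤ maxCDSubgroup G :=
  le_sSup hH

variable [Finite G]

theorem cdMeasure_pos (H : Subgroup G) : 0 < cdMeasure H :=
  Nat.pos_of_ne_zero (mul_ne_zero index_ne_zero_of_finite index_ne_zero_of_finite)

theorem cdMeasure_sup_mul_cdMeasure_inf_le (H K : Subgroup G) :
    cdMeasure (H ⊔ K) * cdMeasure (H ⊓ K) ≤ cdMeasure H * cdMeasure K := by
  set CH := centralizer (H : Set G)
  set CK := centralizer (K : Set G)
  have hC : (CH ⊓ CK).index * (centralizer ((H ⊓ K : Subgroup G) : Set G)).index ≤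
      CH.index * CK.index :=
    calc _ ≤ (CH ⊓ CK).index * (CH ⊔ CK).index :=
          Nat.mul_le_mul_left _ <| index_antitone <|
            sup_le (centralizer_le (SetLike.coe_mono inf_le_left))
              (centralizer_le (SetLike.coe_mono inf_le_right))
      _ ≤ CH.index * CK.index := index_inf_mul_index_sup_le CH CK
  calc cdMeasure (H ⊔ K) * cdMeasure (H ⊓ K)
      = ((H ⊓ K).index * (H ⊔ K).index) *
          ((CH ⊓ CK).index * (centralizer ((H ⊓ K : Subgroup G) : Set G)).index) := by
        rw [cdMeasure, cdMeasure, centralizer_sup]; ring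
    _ ≤ (H.index * K.index) * (CH.index * CK.index) :=
        Nat.mul_le_mul (index_inf_mul_index_sup_le H K) hC
    _ = cdMeasure H * cdMeasure K := by rw [cdMeasure, cdMeasure]; ring

theorem IsCDSubgroup.sup {H K : Subgroup G} (hH : IsCDSubgroup H) (hK : IsCDSubgroup K) :
    IsCDSubgroup (H ⊔ K) := by
  refine le_antisymm (Nat.le_of_mul_le_mul_right ?_ (cdMeasure_pos (H ⊓ K)))
    (cdMu_le_cdMeasure _)
  calc cdMeasure (H ⊔ K) * cdMeasure (H ⊓ K) ≤ cdMeasure H * cdMeasure K :=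
        cdMeasure_sup_mul_cdMeasure_inf_le H K
    _ = cdMu G * cdMu G := by rw [hH, hK]
    _ ≤ cdMu G * cdMeasure (H ⊓ K) := Nat.mul_le_mul_left _ (cdMu_le_cdMeasure _)

theorem supClosed_setOf_isCDSubgroup : SupClosed {H : Subgroup G | IsCDSubgroup H} :=
  fun _ hH _ hK => IsCDSubgroup.sup hH hK

theorem IsCDSubgroup.centralizer {H : Subgroup G} (hH : IsCDSubgroup H) :
    IsCDSubgroup (centralizer (H : Set G)) :=
  le_antisymm (hH ▸ cdMeasure_centralizer_le H) (cdMu_le_cdMeasure _)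

theorem IsCDSubgroup.centralizer_centralizer {H : Subgroup G} (hH : IsCDSubgroup H) :
    Subgroup.centralizer (Subgroup.centralizer (H : Set G) : Set G) = H := by
  have hle := le_centralizer_centralizer H
  have hindex : (Subgroup.centralizer (Subgroup.centralizer (H : Set G) : Set G)).index =
      H.index := by
    have h := hH.centralizer.trans hH.symm
    rw [cdMeasure, cdMeasure, mul_comm H.index] at h
    exact Nat.eq_of_mul_eq_mul_left (Nat.pos_of_ne_zero index_ne_zero_of_finite) h
  exact (hle.eq_of_not_lt fun hlt => (index_strictAnti hlt).ne hindex).symm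

theorem isCDSubgroup_maxCDSubgroup : IsCDSubgroup (maxCDSubgroup G) :=
  supClosed_setOf_isCDSubgroup.sSup_mem_of_nonempty (Set.toFinite _) exists_isCDSubgroup
    subset_rfl

theorem IsCDSubgroup.centralizer_maxCDSubgroup_le {H : Subgroup G} (hH : IsCDSubgroup H) :
    Subgroup.centralizer (maxCDSubgroup G : Set G) ≤ H :=
  hH.centralizer_centralizer ▸ centralizer_le hH.centralizer.le_maxCDSubgroup

end ChermakDelgado

theorem stmt_5 {G : Type*} [Group G] [Finite G] :
    ∃ M : Subgroup G, IsCDSubgroup M ∧ (∀ H : Subgroup G, IsCDSubgroup H → H ≤ M) ∧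
      IsCDSubgroup (Subgroup.centralizer (M : Set G)) ∧
      (∀ H : Subgroup G, IsCDSubgroup H → Subgroup.centralizer (M : Set G) ≤ H) ∧
      Subgroup.centralizer (M : Set G) = (Subgroup.center M).map M.subtype ∧
      Subgroup.centralizer ((Subgroup.centralizer (M : Set G) : Subgroup G) : Set G) = M := by
  have hM : IsCDSubgroup (maxCDSubgroup G) := isCDSubgroup_maxCDSubgroup
  refine ⟨maxCDSubgroup G, hM, fun _ => IsCDSubgroup.le_maxCDSubgroup, hM.centralizer,
    fun _ => IsCDSubgroup.centralizer_maxCDSubgroup_le, ?_, hM.centralizer_centralizer⟩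
  rw [map_subtype_center, inf_eq_left.mpr hM.centralizer_maxCDSubgroup_le]
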